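/- arXiv:2401.11787 — 2 statements merged into one kernel-verified Lean document; each statement's English description precedes it below -/
import Mathlib

section
/- Along any solution of the particle system, the discretized mechanical energy E_n(t) = (1/(na))[Σᵢ₌₁ⁿ H(wᵢ(t)) + Σᵢ₌₂ⁿ Φ(na·sᵢ(t))] satisfies dE_n/dt = -n Σᵢ₌₂ⁿ K(na·sᵢ(t))(w_{i-1}(t) - wᵢ(t))² - (σ/(na)) Σᵢ₌₁ⁿ wᵢ(t)β(wᵢ(t)) ≤ 0, as long as the solution is defined. -/
/-!
Write the equation of particle `i` in conservative form
`β'(wᵢ) ẇᵢ = -σ β(wᵢ) + Gᵢ - Gᵢ₊₁`, where `Gᵢ = na Φ'(na sᵢ) + n²a K(na sᵢ)(wᵢ₋₁ - wᵢ)` is the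
force carried by the spring `i` (and `G₁ = Gₙ₊₁ = 0` at the free ends). Testing with `wᵢ` and
summing by parts turns `∑ wᵢ (Gᵢ - Gᵢ₊₁)` into `-∑ Gᵢ (wᵢ₋₁ - wᵢ)`; its elastic part cancels the
time derivative of the potential `∑ Φ(na sᵢ)`, leaving only the viscous term `-n²a ∑ K (wᵢ₋₁ - wᵢ)²`
and the friction term `-σ ∑ wᵢ β(wᵢ)`, both nonpositive.
-/

open Finset

theorem Finset.sum_Icc_mul_sub_succ {R : Type*} [CommRing R] (f g : ℕ → R) (hg : g 1 = 0)
    (n : ℕ) :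
    ∑ i ∈ Icc 1 n, f i * (g i - g (i + 1)) =
      ∑ i ∈ Icc 2 n, g i * (f i - f (i - 1)) - f n * g (n + 1) := by
  induction n with
  | zero => simp [hg]
  | succ k ih =>
    rw [sum_Icc_succ_top (by omega), ih]
    rcases Nat.eq_zero_or_pos k with rfl | hk
    · simp [hg]
    · rw [sum_Icc_succ_top (by omega : 2 ≤ k + 1), Nat.add_sub_cancel]
      ring

namespace ParticleSystem

variable (n : ℕ) (a : ℝ) (K Φ' : ℝ → ℝ) (x w : ℕ → ℝ)

noncomputable def springForce (i : ℕ) : ℝ :=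
  if 2 ≤ i ∧ i ≤ n then
    (n : ℝ) * a * Φ' ((n : ℝ) * a * (x (i - 1) - x i))
      + (n : ℝ) ^ 2 * a * K ((n : ℝ) * a * (x (i - 1) - x i)) * (w (i - 1) - w i)
  else 0

@[simp]
theorem springForce_one : springForce n a K Φ' x w 1 = 0 := by
  simp [springForce]

@[simp]
theorem springForce_succ_self : springForce n a K Φ' x w (n + 1) = 0 := by
  simp [springForce]

variable {n a K Φ' x w}

theorem springForce_of_mem {i : ℕ} (hi : i ∈ Icc 2 n) :
    springForce n a K Φ' x w i =
      (n : ℝ) * a * Φ' ((n : ℝ) * a * (x (i - 1) - x i))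
        + (n : ℝ) ^ 2 * a * K ((n : ℝ) * a * (x (i - 1) - x i)) * (w (i - 1) - w i) :=
  if_pos (mem_Icc.mp hi)

variable (σ : ℝ) (β q : ℝ → ℝ) (dw : ℕ → ℝ)

theorem force_balance (hn : 2 ≤ n)
    (hode1 : q (w 1) * dw 1 =
        -σ * β (w 1) - (n : ℝ) * a * Φ' ((n : ℝ) * a * (x 1 - x 2))
        + (n : ℝ) ^ 2 * a * K ((n : ℝ) * a * (x 1 - x 2)) * (w 2 - w 1))
    (hodei : ∀ i, 2 ≤ i → i ≤ n - 1 →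
      q (w i) * dw i =
        -σ * β (w i)
        + (n : ℝ) * a * Φ' ((n : ℝ) * a * (x (i - 1) - x i))
        - (n : ℝ) * a * Φ' ((n : ℝ) * a * (x i - x (i + 1)))
        + (n : ℝ) ^ 2 * a * K ((n : ℝ) * a * (x (i - 1) - x i)) * (w (i - 1) - w i)
        + (n : ℝ) ^ 2 * a * K ((n : ℝ) * a * (x i - x (i + 1))) * (w (i + 1) - w i))
    (hoden : q (w n) * dw n =
        -σ * β (w n) + (n : ℝ) * a * Φ' ((n : ℝ) * a * (x (n - 1) - x n))
        + (n : ℝ) ^ 2 * a * K ((n : ℝ) * a * (x (n - 1) - x n)) * (w (n - 1) - w n)) :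
    ∀ i ∈ Icc 1 n, q (w i) * dw i =
      -σ * β (w i) + springForce n a K Φ' x w i - springForce n a K Φ' x w (i + 1) := by
  intro i hi
  obtain ⟨h1i, hin⟩ := mem_Icc.mp hi
  rcases (by omega : i = 1 ∨ (2 ≤ i ∧ i ≤ n - 1) ∨ i = n) with rfl | ⟨h2i, hin'⟩ | rfl
  · rw [springForce_one, show 1 + 1 = 2 from rfl, springForce_of_mem (mem_Icc.mpr ⟨le_rfl, hn⟩),
      hode1]
    ring
  · rw [springForce_of_mem (mem_Icc.mpr ⟨h2i, hin⟩),
      springForce_of_mem (mem_Icc.mpr ⟨by omega, by omega⟩), Nat.add_sub_cancel,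
      hodei i h2i hin']
    ring
  · rw [springForce_succ_self, springForce_of_mem (mem_Icc.mpr ⟨hn, le_rfl⟩), hoden]
    ring

theorem power_balance (hna : (n : ℝ) * a ≠ 0)
    (hbal : ∀ i ∈ Icc 1 n, q (w i) * dw i =
      -σ * β (w i) + springForce n a K Φ' x w i - springForce n a K Φ' x w (i + 1)) :
    1 / ((n : ℝ) * a) *
        (∑ i ∈ Icc 1 n, w i * q (w i) * dw i
          + ∑ i ∈ Icc 2 n, Φ' ((n : ℝ) * a * (x (i - 1) - x i)) * ((n : ℝ) * a * (w (i - 1) - w i)))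
      = -(n : ℝ) * ∑ i ∈ Icc 2 n, K ((n : ℝ) * a * (x (i - 1) - x i)) * (w (i - 1) - w i) ^ 2
        - σ / ((n : ℝ) * a) * ∑ i ∈ Icc 1 n, w i * β (w i) := by
  have kinetic : ∑ i ∈ Icc 1 n, w i * q (w i) * dw i =
      -σ * ∑ i ∈ Icc 1 n, w i * β (w i)
        + ∑ i ∈ Icc 2 n, springForce n a K Φ' x w i * (w i - w (i - 1)) := by
    have by_parts := sum_Icc_mul_sub_succ w (springForce n a K Φ' x w) (springForce_one ..) n
    rw [springForce_succ_self, mul_zero, sub_zero] at by_parts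
    rw [← by_parts, mul_sum, ← sum_add_distrib]
    refine sum_congr rfl fun i hi => ?_
    rw [mul_assoc, hbal i hi]
    ring
  have elastic_cancels :
      ∑ i ∈ Icc 2 n, springForce n a K Φ' x w i * (w i - w (i - 1))
        + ∑ i ∈ Icc 2 n, Φ' ((n : ℝ) * a * (x (i - 1) - x i)) * ((n : ℝ) * a * (w (i - 1) - w i))
      = -((n : ℝ) ^ 2 * a) *
          ∑ i ∈ Icc 2 n, K ((n : ℝ) * a * (x (i - 1) - x i)) * (w (i - 1) - w i) ^ 2 := by
    rw [← sum_add_distrib, mul_sum]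
    refine sum_congr rfl fun i hi => ?_
    rw [springForce_of_mem hi]
    ring
  rw [kinetic, add_assoc, elastic_cancels]
  linear_combination (-(n : ℝ) * ∑ i ∈ Icc 2 n, K ((n : ℝ) * a * (x (i - 1) - x i)) *
    (w (i - 1) - w i) ^ 2) * mul_one_div_cancel hna

theorem dissipation_nonpos (ha : 0 ≤ a) (hσ : 0 ≤ σ)
    (hK : ∀ i ∈ Icc 2 n, 0 ≤ K ((n : ℝ) * a * (x (i - 1) - x i)))
    (hwβ : ∀ i ∈ Icc 1 n, 0 ≤ w i * β (w i)) :
    -(n : ℝ) * ∑ i ∈ Icc 2 n, K ((n : ℝ) * a * (x (i - 1) - x i)) * (w (i - 1) - w i) ^ 2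
      - σ / ((n : ℝ) * a) * ∑ i ∈ Icc 1 n, w i * β (w i) ≤ 0 := by
  have viscous := sum_nonneg fun i hi => mul_nonneg (hK i hi) (sq_nonneg (w (i - 1) - w i))
  have friction := sum_nonneg hwβ
  have hσna : 0 ≤ σ / ((n : ℝ) * a) := by positivity
  nlinarith [mul_nonneg n.cast_nonneg viscous, mul_nonneg hσna friction]

end ParticleSystem

open ParticleSystem in
theorem energy_decay_general
    (n : ℕ) (hn : 2 ≤ n) (a σ b R : ℝ) (ha : 0 < a) (hσ : 0 < σ)
    (β q H K Φ Φ' : ℝ → ℝ)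
    -- β is an antiderivative of q, with β(0)=0 and wβ(w) ≥ 0 on (-1,b)
    (hwβ : ∀ v ∈ Set.Ioo (-1 : ℝ) b, 0 ≤ v * β v)
    -- H' (w) = w q(w), H ≥ 0
    (hHq : ∀ v ∈ Set.Ioo (-1 : ℝ) b, HasDerivAt H (v * q v) v)
    -- K ≥ 0, Φ' is the derivative of Φ, Φ'' = (σ/a)K
    (hKpos : ∀ s : ℝ, 1/R < s → 0 ≤ K s)
    (hΦd : ∀ s : ℝ, 1/R < s → HasDerivAt Φ (Φ' s) s)
    -- the solution of the particle system on ℝ≥0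
    (x w dw : ℕ → ℝ → ℝ)
    -- state-space constraints
    (hstate_w : ∀ t : ℝ, 0 ≤ t → ∀ i ∈ Finset.Icc 1 n, w i t ∈ Set.Ioo (-1 : ℝ) b)
    (hstate_s : ∀ t : ℝ, 0 ≤ t → ∀ i ∈ Finset.Icc 2 n,
      1/R < (n : ℝ) * a * (x (i-1) t - x i t))
    -- dynamics
    (hx : ∀ t : ℝ, 0 ≤ t → ∀ i ∈ Finset.Icc 1 n, HasDerivAt (x i) (w i t) t)
    (hw : ∀ t : ℝ, 0 ≤ t → ∀ i ∈ Finset.Icc 1 n, HasDerivAt (w i) (dw i t) t)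
    (hode1 : ∀ t : ℝ, 0 ≤ t →
      q (w 1 t) * dw 1 t =
        -σ * β (w 1 t) - (n : ℝ) * a * Φ' ((n : ℝ) * a * (x 1 t - x 2 t))
        + (n : ℝ)^2 * a * K ((n : ℝ) * a * (x 1 t - x 2 t)) * (w 2 t - w 1 t))
    (hodei : ∀ t : ℝ, 0 ≤ t → ∀ i, 2 ≤ i → i ≤ n - 1 →
      q (w i t) * dw i t =
        -σ * β (w i t)
        + (n : ℝ) * a * Φ' ((n : ℝ) * a * (x (i-1) t - x i t))
        - (n : ℝ) * a * Φ' ((n : ℝ) * a * (x i t - x (i+1) t))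
        + (n : ℝ)^2 * a * K ((n : ℝ) * a * (x (i-1) t - x i t)) * (w (i-1) t - w i t)
        + (n : ℝ)^2 * a * K ((n : ℝ) * a * (x i t - x (i+1) t)) * (w (i+1) t - w i t))
    (hoden : ∀ t : ℝ, 0 ≤ t →
      q (w n t) * dw n t =
        -σ * β (w n t) + (n : ℝ) * a * Φ' ((n : ℝ) * a * (x (n-1) t - x n t))
        + (n : ℝ)^2 * a * K ((n : ℝ) * a * (x (n-1) t - x n t)) * (w (n-1) t - w n t)) :
    ∀ t : ℝ, 0 ≤ t →
      HasDerivAt (fun τ => (1 / ((n : ℝ) * a)) *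
          ((∑ i ∈ Finset.Icc 1 n, H (w i τ)) +
           ∑ i ∈ Finset.Icc 2 n, Φ ((n : ℝ) * a * (x (i-1) τ - x i τ))))
        (-(n : ℝ) * ∑ i ∈ Finset.Icc 2 n,
            K ((n : ℝ) * a * (x (i-1) t - x i t)) * (w (i-1) t - w i t)^2
         - (σ / ((n : ℝ) * a)) * ∑ i ∈ Finset.Icc 1 n, w i t * β (w i t)) t
      ∧
      (-(n : ℝ) * ∑ i ∈ Finset.Icc 2 n,
            K ((n : ℝ) * a * (x (i-1) t - x i t)) * (w (i-1) t - w i t)^2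
         - (σ / ((n : ℝ) * a)) * ∑ i ∈ Finset.Icc 1 n, w i t * β (w i t)) ≤ 0 := by
  intro t ht
  have kinetic : HasDerivAt (fun τ => ∑ i ∈ Icc 1 n, H (w i τ))
      (∑ i ∈ Icc 1 n, w i t * q (w i t) * dw i t) t :=
    HasDerivAt.fun_sum fun i hi => (hHq _ (hstate_w t ht i hi)).comp t (hw t ht i hi)
  have potential : HasDerivAt (fun τ => ∑ i ∈ Icc 2 n, Φ ((n : ℝ) * a * (x (i - 1) τ - x i τ)))
      (∑ i ∈ Icc 2 n, Φ' ((n : ℝ) * a * (x (i - 1) t - x i t))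
        * ((n : ℝ) * a * (w (i - 1) t - w i t))) t := by
    refine HasDerivAt.fun_sum fun i hi => (hΦd _ (hstate_s t ht i hi)).comp t ?_
    obtain ⟨h2i, hin⟩ := mem_Icc.mp hi
    exact ((hx t ht (i - 1) (mem_Icc.mpr ⟨by omega, by omega⟩)).sub
      (hx t ht i (mem_Icc.mpr ⟨by omega, hin⟩))).const_mul _
  have hna : 0 < (n : ℝ) * a := by positivity
  refine ⟨((kinetic.add potential).const_mul _).congr_deriv ?_,
    dissipation_nonpos (x := fun i => x i t) (w := fun i => w i t) σ β ha.le hσ.le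
      (fun i hi => hKpos _ (hstate_s t ht i hi)) (fun i hi => hwβ _ (hstate_w t ht i hi))⟩
  exact power_balance (x := fun i => x i t) (w := fun i => w i t) σ β q (fun i => dw i t) hna.ne'
    (force_balance σ β q _ hn (hode1 t ht) (hodei t ht) (hoden t ht))

theorem energy_decay
    (n : ℕ) (hn : 2 ≤ n) (a σ b R : ℝ) (ha : 0 < a) (hσ : 0 < σ) (hb : 0 < b) (hR : 1 < R)
    (β q H K Φ Φ' : ℝ → ℝ)
    -- β is an antiderivative of q, with β(0)=0 and wβ(w) ≥ 0 on (-1,b)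
    (hβq : ∀ v ∈ Set.Ioo (-1 : ℝ) b, HasDerivAt β (q v) v)
    (hβ0 : β 0 = 0)
    (hwβ : ∀ v ∈ Set.Ioo (-1 : ℝ) b, 0 ≤ v * β v)
    -- H' (w) = w q(w), H ≥ 0
    (hHq : ∀ v ∈ Set.Ioo (-1 : ℝ) b, HasDerivAt H (v * q v) v)
    (hHpos : ∀ v ∈ Set.Ioo (-1 : ℝ) b, 0 ≤ H v)
    -- K ≥ 0, Φ' is the derivative of Φ, Φ'' = (σ/a)K
    (hKpos : ∀ s : ℝ, 1/R < s → 0 ≤ K s)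
    (hΦd : ∀ s : ℝ, 1/R < s → HasDerivAt Φ (Φ' s) s)
    (hΦ'' : ∀ s : ℝ, 1/R < s → HasDerivAt Φ' ((σ/a) * K s) s)
    -- the solution of the particle system on ℝ≥0
    (x w dw : ℕ → ℝ → ℝ)
    -- state-space constraints
    (hstate_w : ∀ t : ℝ, 0 ≤ t → ∀ i ∈ Finset.Icc 1 n, w i t ∈ Set.Ioo (-1 : ℝ) b)
    (hstate_s : ∀ t : ℝ, 0 ≤ t → ∀ i ∈ Finset.Icc 2 n,
      1/R < (n : ℝ) * a * (x (i-1) t - x i t))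
    -- dynamics
    (hx : ∀ t : ℝ, 0 ≤ t → ∀ i ∈ Finset.Icc 1 n, HasDerivAt (x i) (w i t) t)
    (hw : ∀ t : ℝ, 0 ≤ t → ∀ i ∈ Finset.Icc 1 n, HasDerivAt (w i) (dw i t) t)
    (hode1 : ∀ t : ℝ, 0 ≤ t →
      q (w 1 t) * dw 1 t =
        -σ * β (w 1 t) - (n : ℝ) * a * Φ' ((n : ℝ) * a * (x 1 t - x 2 t))
        + (n : ℝ)^2 * a * K ((n : ℝ) * a * (x 1 t - x 2 t)) * (w 2 t - w 1 t))
    (hodei : ∀ t : ℝ, 0 ≤ t → ∀ i, 2 ≤ i → i ≤ n - 1 →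
      q (w i t) * dw i t =
        -σ * β (w i t)
        + (n : ℝ) * a * Φ' ((n : ℝ) * a * (x (i-1) t - x i t))
        - (n : ℝ) * a * Φ' ((n : ℝ) * a * (x i t - x (i+1) t))
        + (n : ℝ)^2 * a * K ((n : ℝ) * a * (x (i-1) t - x i t)) * (w (i-1) t - w i t)
        + (n : ℝ)^2 * a * K ((n : ℝ) * a * (x i t - x (i+1) t)) * (w (i+1) t - w i t))
    (hoden : ∀ t : ℝ, 0 ≤ t →
      q (w n t) * dw n t =
        -σ * β (w n t) + (n : ℝ) * a * Φ' ((n : ℝ) * a * (x (n-1) t - x n t))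
        + (n : ℝ)^2 * a * K ((n : ℝ) * a * (x (n-1) t - x n t)) * (w (n-1) t - w n t)) :
    ∀ t : ℝ, 0 ≤ t →
      HasDerivAt (fun τ => (1 / ((n : ℝ) * a)) *
          ((∑ i ∈ Finset.Icc 1 n, H (w i τ)) +
           ∑ i ∈ Finset.Icc 2 n, Φ ((n : ℝ) * a * (x (i-1) τ - x i τ))))
        (-(n : ℝ) * ∑ i ∈ Finset.Icc 2 n,
            K ((n : ℝ) * a * (x (i-1) t - x i t)) * (w (i-1) t - w i t)^2
         - (σ / ((n : ℝ) * a)) * ∑ i ∈ Finset.Icc 1 n, w i t * β (w i t)) t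
      ∧
      (-(n : ℝ) * ∑ i ∈ Finset.Icc 2 n,
            K ((n : ℝ) * a * (x (i-1) t - x i t)) * (w (i-1) t - w i t)^2
         - (σ / ((n : ℝ) * a)) * ∑ i ∈ Finset.Icc 1 n, w i t * β (w i t)) ≤ 0 :=
  energy_decay_general n hn a σ b R ha hσ β q H K Φ Φ' hwβ hHq hKpos hΦd x w dw hstate_w hstate_s hx
    hw hode1 hodei hoden
end

section
/- If a solution of the particle system satisfies E_n(t) ≤ E_n(0) for all t and lim_{s→(1/R)⁺}Φ(s) = +∞, then there exists a constant s_min > 1/(naR) (depending only on initial data) such that sᵢ(t) ≥ s_min for all i = 2,…,n as long as the solution is defined. -/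
open Filter Finset

theorem gaps_bounded_below
    (n : ℕ) (hn : 2 ≤ n) (a b R : ℝ) (ha : 0 < a) (hb : 0 < b) (hR : 1 < R)
    (H Φ : ℝ → ℝ)
    (hHnonneg : ∀ v ∈ Set.Ioo (-1 : ℝ) b, 0 ≤ H v)
    (hΦnonneg : ∀ s ∈ Set.Ioi (1/R), 0 ≤ Φ s)
    (hΦblow : Tendsto Φ (nhdsWithin (1/R) (Set.Ioi (1/R))) atTop)
    (D : Set ℝ) (hD0 : (0 : ℝ) ∈ D)
    (x w : ℕ → ℝ → ℝ)
    (hstate_w : ∀ t ∈ D, ∀ i ∈ Finset.Icc 1 n, w i t ∈ Set.Ioo (-1 : ℝ) b)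
    (hstate_s : ∀ t ∈ D, ∀ i ∈ Finset.Icc 2 n,
      1/R < (n : ℝ) * a * (x (i-1) t - x i t))
    (E : ℝ → ℝ)
    (hE : ∀ t ∈ D, E t = (1 / ((n : ℝ) * a)) *
      ((∑ i ∈ Finset.Icc 1 n, H (w i t)) +
       ∑ i ∈ Finset.Icc 2 n, Φ ((n : ℝ) * a * (x (i-1) t - x i t))))
    (hEdec : ∀ t ∈ D, E t ≤ E 0) :
    ∃ smin : ℝ, 1 / ((n : ℝ) * a * R) < smin ∧
      ∀ t ∈ D, ∀ i ∈ Finset.Icc 2 n, smin ≤ x (i-1) t - x i t := by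
  have hna : (0:ℝ) < (n : ℝ) * a := by
    have : (0:ℝ) < (n:ℝ) := by positivity
    -- n ≥ 2 > 0
    have hn0 : (0:ℝ) < (n:ℝ) := by
      exact_mod_cast Nat.lt_of_lt_of_le (by norm_num) hn
    exact mul_pos hn0 ha
  set M := (n : ℝ) * a * E 0 with hM
  have hev : ∀ᶠ s in nhdsWithin (1/R) (Set.Ioi (1/R)), M < Φ s :=
    hΦblow.eventually (eventually_gt_atTop M)
  obtain ⟨c, hc, hsub⟩ := (mem_nhdsGT_iff_exists_Ioo_subset).mp hev
  refine ⟨c / ((n:ℝ) * a), ?_, ?_⟩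
  · rw [div_lt_div_iff₀ (by positivity) hna]
    have hc' : 1 / R < c := hc
    have hR0 : (0:ℝ) < R := by linarith
    have h1 : (1/R) * ((n:ℝ)*a*R) = (n:ℝ)*a := by field_simp
    linarith [mul_lt_mul_of_pos_right hc' (by positivity : (0:ℝ) < (n:ℝ)*a*R)]
  · intro t ht i hi
    set s := (n : ℝ) * a * (x (i-1) t - x i t) with hs
    have hs1 : 1/R < s := hstate_s t ht i hi
    have hΦle : Φ s ≤ M := by
      have hsum1 : 0 ≤ ∑ j ∈ Finset.Icc 1 n, H (w j t) :=
        Finset.sum_nonneg fun j hj => hHnonneg _ (hstate_w t ht j hj)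
      have hterm : Φ s ≤ ∑ j ∈ Finset.Icc 2 n, Φ ((n : ℝ) * a * (x (j-1) t - x j t)) :=
        Finset.single_le_sum (fun j hj => hΦnonneg _ (hstate_s t ht j hj)) hi
      have hEt := hE t ht
      have : E t = (1 / ((n : ℝ) * a)) *
          ((∑ j ∈ Finset.Icc 1 n, H (w j t)) +
           ∑ j ∈ Finset.Icc 2 n, Φ ((n : ℝ) * a * (x (j-1) t - x j t))) := hEt
      have hEM : (∑ j ∈ Finset.Icc 1 n, H (w j t)) +
           ∑ j ∈ Finset.Icc 2 n, Φ ((n : ℝ) * a * (x (j-1) t - x j t)) = (n:ℝ) * a * E t := by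
        rw [this]; field_simp
      have hle : Φ s ≤ (n:ℝ) * a * E t := by
        rw [← hEM]; linarith
      have : (n:ℝ) * a * E t ≤ M := by
        rw [hM]
        exact mul_le_mul_of_nonneg_left (hEdec t ht) hna.le
      linarith
    have hsc : c ≤ s := by
      by_contra hlt
      push_neg at hlt
      have : M < Φ s := hsub ⟨hs1, hlt⟩
      linarith
    rw [div_le_iff₀ hna]
    linarith [hsc, mul_comm ((n:ℝ)*a) (x (i-1) t - x i t)]
end
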